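/- arXiv:2208.05046 — 2 statements merged into one kernel-verified Lean document; each statement's English description precedes it below -/
import Mathlib

section
/- Soundness of interpolation-based model checking (semantic form of Theorem 1): Let S be a type with initial states I : Set S, transition relation T : S → S → Prop, and bad states Bad : Set S. Fix a loop-unrolling bound k ≥ 1 and n : ℕ, and suppose there is a sequence of state sets C : ℕ → Set S (the initial states followed by the derived interpolants) such that: (1) C 0 = I; (2) for every i ≤ n, post(C i) ⊆ C (i+1); (3) for every j ≤ k, no state of Bad is reachable from I in exactly j transitions (all BMC queries up to bound k are unsatisfiable); (4) for every i ≤ n, no state of Bad is reachable from C i in exactly k transitions (each iteration's BMC query is unsatisfiable); and (5) C (n+1) ⊆ ⋃_{i ≤ n} C i (a fixed point is reached). Then no state of Bad is reachable from I, i.e., for every s ∈ I and every s' with Relation.ReflTransGen T s s', we have s' ∉ Bad. -/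
/-- The post-image of a set of states under a transition relation. -/
def post {S : Type*} (T : S → S → Prop) (X : Set S) : Set S :=
  {s' | ∃ s ∈ X, T s s'}

theorem post_mono {S : Type*} (T : S → S → Prop) {X Y : Set S} (h : X ⊆ Y) :
    post T X ⊆ post T Y := by
  rintro s' ⟨s, hs, hT⟩
  exact ⟨s, h hs, hT⟩

theorem post_iter_mono {S : Type*} (T : S → S → Prop) (m : ℕ) {X Y : Set S} (h : X ⊆ Y) :
    (post T)^[m] X ⊆ (post T)^[m] Y := by
  induction m with
  | zero => simpa using h
  | succ m ih =>
    rw [Function.iterate_succ_apply', Function.iterate_succ_apply']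
    exact post_mono T ih

theorem post_iUnion {S ι : Type*} (T : S → S → Prop) (X : ι → Set S) :
    post T (⋃ i, X i) = ⋃ i, post T (X i) := by
  ext s'
  constructor
  · rintro ⟨s, hs, hT⟩
    rcases Set.mem_iUnion.mp hs with ⟨i, hi⟩
    exact Set.mem_iUnion.mpr ⟨i, s, hi, hT⟩
  · intro hs
    rcases Set.mem_iUnion.mp hs with ⟨i, s, hi, hT⟩
    exact ⟨s, Set.mem_iUnion.mpr ⟨i, hi⟩, hT⟩

theorem post_iter_iUnion {S ι : Type*} (T : S → S → Prop) (m : ℕ) (X : ι → Set S) :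
    (post T)^[m] (⋃ i, X i) = ⋃ i, (post T)^[m] (X i) := by
  induction m with
  | zero => simp
  | succ m ih =>
    simp only [Function.iterate_succ_apply', ih, post_iUnion]

/-- Soundness of interpolation-based model checking (semantic form). -/
theorem imc_soundness {S : Type*} (I : Set S) (T : S → S → Prop) (Bad : Set S)
    (k n : ℕ) (hk : 1 ≤ k) (C : ℕ → Set S)
    (hC0 : C 0 = I)
    (hstep : ∀ i ≤ n, post T (C i) ⊆ C (i + 1))
    (hbmcI : ∀ j ≤ k, (post T)^[j] I ∩ Bad = ∅)
    (hbmcC : ∀ i ≤ n, (post T)^[k] (C i) ∩ Bad = ∅)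
    (hfix : C (n + 1) ⊆ ⋃ i ≤ n, C i) :
    ∀ s ∈ I, ∀ s', Relation.ReflTransGen T s s' → s' ∉ Bad := by
  intro s hs s' hreach
  have hiter : ∃ m, s' ∈ (post T)^[m] I := by
    induction hreach with
    | refl => exact ⟨0, hs⟩
    | tail _ hT ih =>
      rcases ih with ⟨m, hm⟩
      refine ⟨m + 1, ?_⟩
      rw [Function.iterate_succ_apply']
      exact ⟨_, hm, hT⟩
  intro hbad
  rcases hiter with ⟨m, hm⟩
  set R : Set S := ⋃ i ≤ n, C i with hR
  have hReq : R = ⋃ (i : {i : ℕ // i ≤ n}), C i.val := by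
    ext x; simp [hR, Set.mem_iUnion]
  have hIR : I ⊆ R := by
    rw [← hC0]
    exact Set.subset_biUnion_of_mem (u := fun i => C i) (Nat.zero_le n)
  have hpostR : post T R ⊆ R := by
    rintro x ⟨y, hy, hT⟩
    rw [hR] at hy
    rcases Set.mem_iUnion₂.mp hy with ⟨i, hi, hyi⟩
    have hx1 : x ∈ C (i + 1) := hstep i hi ⟨y, hyi, hT⟩
    rcases Nat.lt_or_ge i n with h | h
    · exact Set.mem_iUnion₂.mpr ⟨i + 1, h, hx1⟩
    · have : i = n := le_antisymm hi h
      subst this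
      exact hfix hx1
  have hiterR : ∀ m, (post T)^[m] I ⊆ R := by
    intro m
    induction m with
    | zero => simpa using hIR
    | succ m ih =>
      rw [Function.iterate_succ_apply']
      exact (post_mono T ih).trans hpostR
  rcases Nat.lt_or_ge m k with hmk | hmk
  · have h1 := hbmcI m hmk.le
    have h2 : s' ∈ (post T)^[m] I ∩ Bad := ⟨hm, hbad⟩
    rw [h1] at h2
    exact h2
  · have hmeq : k + (m - k) = m := Nat.add_sub_cancel' hmk
    have hs'k : s' ∈ (post T)^[k] ((post T)^[m - k] I) := by
      rw [← Function.iterate_add_apply, hmeq]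
      exact hm
    have hs'R : s' ∈ (post T)^[k] R := post_iter_mono T k (hiterR (m - k)) hs'k
    rw [hReq, post_iter_iUnion] at hs'R
    rcases Set.mem_iUnion.mp hs'R with ⟨⟨i, hi⟩, hxi⟩
    have h1 := hbmcC i hi
    have h2 : s' ∈ (post T)^[k] (C i) ∩ Bad := ⟨hxi, hbad⟩
    rw [h1] at h2
    exact h2
end

section
/- Correctness of the fixed-point detection in the IMC inner loop: Let S be a type, I : Set S, T : S → S → Prop, n : ℕ, and C : ℕ → Set S with C 0 = I. Suppose that for every i ≤ n, post(C i) ⊆ C (i+1), and that the newly derived interpolant is contained in the union of the initial states and all previous interpolants, i.e., C (n+1) ⊆ ⋃_{i ≤ n} C i. Then F := ⋃_{i ≤ n} C i satisfies I ⊆ F and post(F) ⊆ F (F is an inductive set with respect to the transition relation), and consequently every state reachable from I lies in F. -/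
/-- Correctness of the fixed-point detection in the IMC inner loop:
the union of the initial states and the derived interpolants is an inductive
set containing the initial states, hence contains all reachable states. -/
theorem imc_fixed_point_detection {S : Type*} (I : Set S) (T : S → S → Prop)
    (n : ℕ) (C : ℕ → Set S) (hC0 : C 0 = I)
    (hstep : ∀ i ≤ n, post T (C i) ⊆ C (i + 1))
    (hfix : C (n + 1) ⊆ ⋃ i ≤ n, C i) :
    I ⊆ (⋃ i ≤ n, C i) ∧ post T (⋃ i ≤ n, C i) ⊆ (⋃ i ≤ n, C i) ∧
      ∀ s ∈ I, ∀ s', Relation.ReflTransGen T s s' → s' ∈ ⋃ i ≤ n, C i := by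
  have hI : I ⊆ ⋃ i ≤ n, C i := by
    intro s hs
    exact Set.mem_biUnion (Nat.zero_le n) (hC0 ▸ hs)
  have hpost : post T (⋃ i ≤ n, C i) ⊆ ⋃ i ≤ n, C i := by
    rintro s' ⟨s, hs, hT⟩
    obtain ⟨i, hi, hsi⟩ := Set.mem_iUnion₂.mp hs
    have h1 : s' ∈ C (i + 1) := hstep i hi ⟨s, hsi, hT⟩
    rcases lt_or_eq_of_le hi with h | rfl
    · exact Set.mem_biUnion h h1
    · exact hfix h1
  refine ⟨hI, hpost, fun s hs s' hr => ?_⟩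
  induction hr with
  | refl => exact hI hs
  | tail _ hT ih => exact hpost ⟨_, ih, hT⟩
end
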